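/- arXiv:2010.05540 — 2 statements merged into one kernel-verified Lean document; each statement's English description precedes it below -/
import Mathlib

section
/- Let γ > 1 be real and let φ : ℝ → ℝ be a positive, even, L²-normalized eigenfunction of the operator −d²/dz² + |z|^{2γ} with eigenvalue μ₀ > 0, i.e. −φ''(z) + |z|^{2γ}φ(z) = μ₀ φ(z) on ℝ, with φ(z) → 0 as z → +∞. Then there exists a constant c > 0 such that φ(z) ~ c · z^{-γ/2} · exp(−z^{γ+1}/(γ+1)) as z → +∞, i.e. the ratio φ(z) / (z^{-γ/2} e^{−z^{γ+1}/(γ+1)}) converges to c. -/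
/-!
Let `φ₋(z) = z^(-γ/2) exp(-z^(γ+1)/(γ+1))` and `s = (log (φ / φ₋))' = φ'/φ + A`, where
`A = -φ₋'/φ₋ ~ z^γ`. Since `φ₋` solves the equation up to a potential `q = O(z⁻²)`, `s` obeys the
Riccati equation `s' = 2 A s - s² - μ₀ - q`. A solution that is ever nonpositive blows up in
finite time, so `s > 0`. As `φ` is convex near infinity and tends to `0`, `φ' ≤ 0`, i.e. `s ≤ A`;
and if `s(b) > C b^(-γ)` then `s` stays above that level, which makes `s - A` grow at unit speed.
Hence `0 < s ≤ C z^(-γ)` is integrable at infinity, `log (φ / φ₋)` converges, and `φ / φ₋` tends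
to a positive constant.
-/

open Filter Set Real Topology

section Calculus

variable {f f' : ℝ → ℝ} {a : ℝ}

lemma monotoneOn_Ici_of_hasDerivAt_nonneg (hf : ∀ x ∈ Ici a, HasDerivAt f (f' x) x)
    (hf' : ∀ x ∈ Ici a, 0 ≤ f' x) : MonotoneOn f (Ici a) :=
  monotoneOn_of_hasDerivWithinAt_nonneg (convex_Ici a) (HasDerivAt.continuousOn hf)
    (fun x hx => (hf x (interior_subset hx)).hasDerivWithinAt)
    (fun x hx => hf' x (interior_subset hx))

lemma exists_pos_of_one_le_deriv (hf : ∀ x ∈ Ici a, HasDerivAt f (f' x) x)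
    (hf' : ∀ x ∈ Ici a, 1 ≤ f' x) : ∃ x ∈ Ici a, 0 < f x := by
  have hmono : MonotoneOn (fun x => f x - x) (Ici a) :=
    monotoneOn_Ici_of_hasDerivAt_nonneg (fun x hx => (hf x hx).sub (hasDerivAt_id x))
      (fun x hx => sub_nonneg.2 (hf' x hx))
  have hx : a ≤ a + |f a| + 1 := by linarith [abs_nonneg (f a)]
  refine ⟨a + |f a| + 1, hx, ?_⟩
  have := hmono self_mem_Ici hx hx
  linarith [neg_abs_le (f a)]

lemma le_of_hasDerivAt_of_boundary {B B' : ℝ → ℝ} (hf : ∀ x ∈ Ici a, HasDerivAt f (f' x) x)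
    (hB : ∀ x ∈ Ici a, HasDerivAt B (B' x) x) (ha : f a ≤ B a)
    (bound : ∀ x ∈ Ici a, f x = B x → f' x < B' x) : ∀ x ∈ Ici a, f x ≤ B x := fun _ hx =>
  image_le_of_deriv_right_lt_deriv_boundary'
    (HasDerivAt.continuousOn fun y hy => hf y hy.1)
    (fun y hy => (hf y hy.1).hasDerivWithinAt) ha
    (HasDerivAt.continuousOn fun y hy => hB y hy.1)
    (fun y hy => (hB y hy.1).hasDerivWithinAt) (fun y hy => bound y hy.1) ⟨hx, le_rfl⟩

lemma pos_of_deriv_lt_neg_sq (hf : ∀ x ∈ Ici a, HasDerivAt f (f' x) x)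
    (h : ∀ x ∈ Ici a, f x ≤ 0 → f' x < -f x ^ 2) : 0 < f a := by
  by_contra! ha
  have hnonpos : ∀ x ∈ Ici a, f x ≤ 0 :=
    le_of_hasDerivAt_of_boundary hf (fun _ _ => hasDerivAt_const _ 0) ha
      (fun x hx hx0 => by simpa [hx0] using h x hx hx0.le)
  have hanti : StrictAntiOn f (Ici a) :=
    strictAntiOn_of_hasDerivWithinAt_neg (convex_Ici a) (HasDerivAt.continuousOn hf)
      (fun x hx => (hf x (interior_subset hx)).hasDerivWithinAt)
      (fun x hx => (h x (interior_subset hx) (hnonpos x (interior_subset hx))).trans_le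
        (neg_nonpos.2 (sq_nonneg _)))
  have hIci : Ici (a + 1) ⊆ Ici a := Ici_subset_Ici.2 (by linarith)
  have hneg : ∀ x ∈ Ici (a + 1), f x < 0 := fun x hx =>
    (hanti self_mem_Ici (hIci hx) (by linarith [mem_Ici.1 hx])).trans_le ha
  -- `1 / f` grows at least at unit speed, so it becomes positive
  obtain ⟨x, hx, hpos⟩ := exists_pos_of_one_le_deriv (a := a + 1) (f := fun x => (f x)⁻¹)
    (fun x hx => (hf x (hIci hx)).inv (hneg x hx).ne)
    (fun x hx => by
      have hfx := hneg x hx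
      rw [le_div_iff₀ (by nlinarith)]
      linarith [h x (hIci hx) hfx.le])
  exact (inv_lt_zero.2 (hneg x hx)).not_gt hpos

lemma deriv_nonpos_of_tendsto_zero (hf : ∀ x ∈ Ici a, HasDerivAt f (f' x) x)
    (hf' : MonotoneOn f' (Ici a)) (hpos : ∀ x ∈ Ici a, 0 < f x)
    (hlim : Tendsto f atTop (𝓝 0)) : ∀ x ∈ Ici a, f' x ≤ 0 := by
  intro x hx
  by_contra! hx'
  have hmono : MonotoneOn f (Ici x) :=
    monotoneOn_Ici_of_hasDerivAt_nonneg (fun y hy => hf y (mem_Ici.2 (le_trans hx hy)))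
      (fun y hy => hx'.le.trans (hf' hx (mem_Ici.2 (le_trans hx hy)) hy))
  have : f x ≤ 0 := ge_of_tendsto hlim
    (eventually_atTop.2 ⟨x, fun y hy => hmono self_mem_Ici hy hy⟩)
  linarith [hpos x hx]

lemma exists_tendsto_of_monotoneOn_Ici {M : ℝ} (hf : MonotoneOn f (Ici a))
    (hM : ∀ x ∈ Ici a, f x ≤ M) : ∃ L, Tendsto f atTop (𝓝 L) := by
  have hmono : Monotone fun x => f (max a x) := fun x y hxy =>
    hf (le_max_left a x) (le_max_left a y) (max_le_max le_rfl hxy)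
  refine ⟨_, (tendsto_atTop_ciSup hmono ⟨M, ?_⟩).congr' ?_⟩
  · rintro _ ⟨x, rfl⟩
    exact hM _ (le_max_left a x)
  · filter_upwards [eventually_ge_atTop a] with x hx
    rw [max_eq_right hx]

/-- Integrating `0 ≤ f' ≤ C x^(-γ)`: `f` increases, but by at most `C/(γ-1) x^(1-γ)` after `x`. -/
lemma exists_tendsto_of_hasDerivAt_of_le_rpow {C γ : ℝ} (ha : 0 < a) (hγ : 1 < γ)
    (hf : ∀ x ∈ Ici a, HasDerivAt f (f' x) x)
    (hf' : ∀ x ∈ Ici a, 0 ≤ f' x ∧ f' x ≤ C * x ^ (-γ)) : ∃ L, Tendsto f atTop (𝓝 L) := by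
  have hpos : ∀ x ∈ Ici a, 0 < x := fun x hx => ha.trans_le hx
  have hC : 0 ≤ C := nonneg_of_mul_nonneg_left ((hf' a self_mem_Ici).1.trans (hf' a self_mem_Ici).2)
    (rpow_pos_of_pos ha _)
  set K := C / (γ - 1)
  have hK : 0 ≤ K := div_nonneg hC (by linarith)
  have hanti : MonotoneOn (fun x => -(f x + K * x ^ (1 - γ))) (Ici a) := by
    refine monotoneOn_Ici_of_hasDerivAt_nonneg
      (f' := fun x => -(f' x + K * ((1 - γ) * x ^ (1 - γ - 1)))) (fun x hx => ?_) (fun x hx => ?_)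
    · have hrpow := hasDerivAt_rpow_const (p := 1 - γ) (Or.inl (hpos x hx).ne')
      exact ((hf x hx).add (hrpow.const_mul K)).neg
    · have : K * ((1 - γ) * x ^ (1 - γ - 1)) = -(C * x ^ (-γ)) := by
        rw [show 1 - γ - 1 = -γ by ring, div_mul_eq_mul_div, div_eq_iff (by linarith)]
        ring
      linarith [(hf' x hx).2]
  refine exists_tendsto_of_monotoneOn_Ici
    (monotoneOn_Ici_of_hasDerivAt_nonneg hf fun x hx => (hf' x hx).1) (M := f a + K * a ^ (1 - γ))
    (fun x hx => ?_)
  have := hanti self_mem_Ici hx hx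
  have : 0 ≤ K * x ^ (1 - γ) := mul_nonneg hK (rpow_nonneg (hpos x hx).le _)
  linarith

end Calculus

noncomputable section WKB

/-- The decaying WKB solution `φ₋(z) = z^(-γ/2) exp(-z^(γ+1)/(γ+1))`: it satisfies
`φ₋' = -wkbRate γ · φ₋` and `φ₋'' = (z^(2γ) + wkbDefect γ) · φ₋` for `z > 0`. -/
def wkbApprox (γ z : ℝ) : ℝ := z ^ (-(γ / 2)) * exp (-(z ^ (γ + 1) / (γ + 1)))

def wkbRate (γ z : ℝ) : ℝ := z ^ γ + γ / 2 * z⁻¹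

def wkbDefect (γ z : ℝ) : ℝ := (γ ^ 2 + 2 * γ) / (4 * z ^ 2)

/-- The right-hand side of the Riccati equation satisfied by the logarithmic derivative of
`φ / φ₋` when `-φ'' + z^(2γ) φ = μ φ`. -/
def wkbRiccati (γ μ z y : ℝ) : ℝ := 2 * wkbRate γ z * y - y ^ 2 - (μ + wkbDefect γ z)

variable {γ μ z : ℝ}

lemma wkbApprox_pos (hz : 0 < z) : 0 < wkbApprox γ z :=
  mul_pos (rpow_pos_of_pos hz _) (exp_pos _)

lemma rpow_le_wkbRate (hγ : 0 ≤ γ) (hz : 0 < z) : z ^ γ ≤ wkbRate γ z := by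
  have : 0 ≤ γ / 2 * z⁻¹ := by positivity
  unfold wkbRate
  linarith

lemma wkbDefect_le (hγ : 0 ≤ γ) (hz : 1 ≤ z) : wkbDefect γ z ≤ (γ ^ 2 + 2 * γ) / 4 :=
  div_le_div_of_nonneg_left (by positivity) (by norm_num) (by nlinarith)

lemma hasDerivAt_wkbRate (hz : 0 < z) :
    HasDerivAt (wkbRate γ) (γ * z ^ (γ - 1) - γ / 2 * (z ^ 2)⁻¹) z := by
  have := (hasDerivAt_rpow_const (p := γ) (Or.inl hz.ne')).add
    ((hasDerivAt_inv hz.ne').const_mul (γ / 2))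
  refine this.congr_deriv ?_
  ring

lemma wkbRate_sq_sub_deriv (hz : 0 < z) :
    wkbRate γ z ^ 2 - (γ * z ^ (γ - 1) - γ / 2 * (z ^ 2)⁻¹) = z ^ (2 * γ) + wkbDefect γ z := by
  have h2γ : z ^ (2 * γ) = z ^ γ * z ^ γ := by rw [two_mul, rpow_add hz]
  have hγ1 : z ^ (γ - 1) = z ^ γ * z⁻¹ := by rw [rpow_sub_one hz.ne', div_eq_mul_inv]
  rw [h2γ, hγ1]
  unfold wkbRate wkbDefect
  field_simp
  ring

lemma hasDerivAt_wkbApprox (hγ : γ + 1 ≠ 0) (hz : 0 < z) :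
    HasDerivAt (wkbApprox γ) (-wkbRate γ z * wkbApprox γ z) z := by
  have hpow := hasDerivAt_rpow_const (p := -(γ / 2)) (Or.inl hz.ne')
  have hexp := ((hasDerivAt_rpow_const (p := γ + 1) (Or.inl hz.ne')).div_const (γ + 1)).neg.exp
  refine (hpow.mul hexp).congr_deriv ?_
  simp only [Pi.neg_apply]
  rw [rpow_sub_one hz.ne', add_sub_cancel_right]
  unfold wkbApprox wkbRate
  field_simp
  ring

lemma hasDerivAt_log_div_wkbApprox {φ φ' : ℝ → ℝ} (hγ : γ + 1 ≠ 0) (hz : 0 < z)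
    (hφ : HasDerivAt φ (φ' z) z) (hφz : 0 < φ z) :
    HasDerivAt (fun x => log (φ x / wkbApprox γ x)) (φ' z / φ z + wkbRate γ z) z := by
  have hw := wkbApprox_pos (γ := γ) hz
  refine ((hφ.div (hasDerivAt_wkbApprox hγ hz) hw.ne').log (div_pos hφz hw).ne').congr_deriv ?_
  simp only [Pi.div_apply]
  field_simp
  ring

lemma hasDerivAt_logDeriv_add_wkbRate {φ φ' : ℝ → ℝ} (hz : 0 < z) (hφ : HasDerivAt φ (φ' z) z)
    (hφ' : HasDerivAt φ' ((z ^ (2 * γ) - μ) * φ z) z) (hφz : φ z ≠ 0) :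
    HasDerivAt (fun x => φ' x / φ x + wkbRate γ x)
      (wkbRiccati γ μ z (φ' z / φ z + wkbRate γ z)) z := by
  refine ((hφ'.div hφ hφz).add (hasDerivAt_wkbRate hz)).congr_deriv ?_
  rw [show ((z ^ (2 * γ) - μ) * φ z * φ z - φ' z * φ' z) / φ z ^ 2
      = z ^ (2 * γ) - μ - (φ' z / φ z) ^ 2 by field_simp]
  unfold wkbRiccati
  linear_combination (-1 : ℝ) * wkbRate_sq_sub_deriv (γ := γ) hz

lemma wkbRiccati_pos {s : ℝ → ℝ} (hγ : 0 ≤ γ) (hμ : 0 < μ)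
    (hs : ∀ z ∈ Ioi 0, HasDerivAt s (wkbRiccati γ μ z (s z)) z) : ∀ z ∈ Ioi 0, 0 < s z := by
  intro a ha
  have hIci : Ici a ⊆ Ioi 0 := Ici_subset_Ioi.2 ha
  refine pos_of_deriv_lt_neg_sq (fun z hz => hs z (hIci hz)) fun z hz hsz => ?_
  have hz : 0 < z := hIci hz
  have hA : 0 ≤ wkbRate γ z := (rpow_nonneg hz.le γ).trans (rpow_le_wkbRate hγ hz)
  have hq : 0 ≤ wkbDefect γ z := by unfold wkbDefect; positivity
  unfold wkbRiccati
  nlinarith [mul_nonneg hA (neg_nonneg.2 hsz)]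

lemma one_le_wkbRiccati_sub_deriv {c C y : ℝ} (hγ : 1 ≤ γ) (hz : 1 ≤ z) (hC : 0 ≤ C)
    (hp : μ + wkbDefect γ z ≤ C - 1) (hcz : γ + C ≤ c * z) (hc : 0 ≤ c) (hcy : c ≤ y)
    (hyA : y ≤ wkbRate γ z) :
    1 ≤ wkbRiccati γ μ z y - (γ * z ^ (γ - 1) - γ / 2 * (z ^ 2)⁻¹) := by
  have hz0 : 0 < z := zero_lt_one.trans_le hz
  have hzγ : z ^ γ = z ^ (γ - 1) * z := by rw [rpow_sub_one hz0.ne', div_mul_cancel₀ _ hz0.ne']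
  have h1 : c * z ^ γ ≤ y * wkbRate γ z :=
    mul_le_mul hcy (rpow_le_wkbRate (by linarith) hz0) (rpow_nonneg hz0.le γ) (hc.trans hcy)
  have h2 : y * wkbRate γ z ≤ 2 * wkbRate γ z * y - y ^ 2 := by
    nlinarith [mul_nonneg (hc.trans hcy) (sub_nonneg.2 hyA)]
  have h3 : γ * z ^ (γ - 1) + C ≤ c * z ^ γ := by
    rw [hzγ]
    nlinarith [mul_nonneg (sub_nonneg.2 (one_le_rpow hz (by linarith : 0 ≤ γ - 1)))
      (by linarith : 0 ≤ c * z - γ)]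
  have h4 : 0 ≤ γ / 2 * (z ^ 2)⁻¹ := by positivity
  unfold wkbRiccati
  linarith

lemma wkbRiccati_le {a : ℝ} {s : ℝ → ℝ} (hγ : 1 < γ) (hμ : 0 ≤ μ)
    (ha : μ + (γ ^ 2 + 2 * γ) / 4 + 1 ≤ a)
    (hs : ∀ z ∈ Ici a, HasDerivAt s (wkbRiccati γ μ z (s z)) z)
    (hsA : ∀ z ∈ Ici a, s z ≤ wkbRate γ z) :
    ∀ z ∈ Ici a, s z ≤ (μ + (γ ^ 2 + 2 * γ) / 4 + 1) * z ^ (-γ) := by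
  have hC : 1 ≤ μ + (γ ^ 2 + 2 * γ) / 4 + 1 := by nlinarith
  set C := μ + (γ ^ 2 + 2 * γ) / 4 + 1 with hC_def
  intro b hb
  have hCb : C ≤ b := ha.trans hb
  have hb1 : 1 ≤ b := hC.trans hCb
  have hb0 : 0 < b := zero_lt_one.trans_le hb1
  have hIci : Ici b ⊆ Ici a := Ici_subset_Ici.2 hb
  by_contra! hsb
  set c := C * b ^ (-γ)
  have hc0 : 0 < c := by positivity
  have hcb : c * b ^ γ = C := by rw [mul_assoc, ← rpow_add hb0, neg_add_cancel, rpow_zero, mul_one]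
  have hc1 : c ≤ 1 := by
    have : C ≤ b ^ γ := hCb.trans (self_le_rpow_of_one_le hb1 hγ.le)
    nlinarith
  have hp : ∀ z ∈ Ici b, μ + wkbDefect γ z ≤ C - 1 := fun z hz => by
    linarith [wkbDefect_le (γ := γ) (by linarith) (hb1.trans hz), hC_def]
  -- `c` is a lower barrier beyond `b` ...
  have hcs : ∀ z ∈ Ici b, c ≤ s z :=
    le_of_hasDerivAt_of_boundary (fun _ _ => hasDerivAt_const _ c) (fun z hz => hs z (hIci hz))
      hsb.le fun z hz hcz => by
        have hz0 : 0 < z := hb0.trans_le hz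
        have hAc : C ≤ wkbRate γ z * c := by
          rw [← hcb, mul_comm c]
          exact mul_le_mul_of_nonneg_right ((rpow_le_rpow hb0.le hz (by linarith)).trans
            (rpow_le_wkbRate (by linarith) hz0)) hc0.le
        rw [← hcz]
        unfold wkbRiccati
        nlinarith [hp z hz]
  set b' := max b ((γ + C) / c)
  have hbb' : Ici b' ⊆ Ici b := Ici_subset_Ici.2 (le_max_left _ _)
  obtain ⟨z, hz, hpos⟩ := exists_pos_of_one_le_deriv (a := b') (f := fun z => s z - wkbRate γ z)
    (fun z hz => (hs z (hIci (hbb' hz))).sub (hasDerivAt_wkbRate (hb0.trans_le (hbb' hz))))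
    fun z hz => one_le_wkbRiccati_sub_deriv hγ.le (hb1.trans (hbb' hz)) (by linarith)
      (hp z (hbb' hz)) ((div_le_iff₀' hc0).1 ((le_max_right _ _).trans hz)) hc0.le
      (hcs z (hbb' hz)) (hsA z (hIci (hbb' hz)))
  linarith [hsA z (hIci (hbb' hz))]

theorem exists_tendsto_log_div_wkbApprox {φ φ' : ℝ → ℝ} (hγ : 1 < γ) (hμ : 0 < μ)
    (hφ : ∀ z, HasDerivAt φ (φ' z) z)
    (hφ' : ∀ z ∈ Ioi 0, HasDerivAt φ' ((z ^ (2 * γ) - μ) * φ z) z)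
    (hpos : ∀ z, 0 < φ z) (hdecay : Tendsto φ atTop (𝓝 0)) :
    ∃ L, Tendsto (fun z => log (φ z / wkbApprox γ z)) atTop (𝓝 L) := by
  have hC : 1 ≤ μ + (γ ^ 2 + 2 * γ) / 4 + 1 := by nlinarith
  have hμC : μ ≤ μ + (γ ^ 2 + 2 * γ) / 4 + 1 := by nlinarith
  set C := μ + (γ ^ 2 + 2 * γ) / 4 + 1
  have hIci : Ici C ⊆ Ioi 0 := Ici_subset_Ioi.2 (zero_lt_one.trans_le hC)
  set s := fun z => φ' z / φ z + wkbRate γ z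
  have hs : ∀ z ∈ Ioi 0, HasDerivAt s (wkbRiccati γ μ z (s z)) z := fun z hz =>
    hasDerivAt_logDeriv_add_wkbRate hz (hφ z) (hφ' z hz) (hpos z).ne'
  have hφ'_mono : MonotoneOn φ' (Ici C) :=
    monotoneOn_Ici_of_hasDerivAt_nonneg (fun z hz => hφ' z (hIci hz)) fun z hz =>
      have : μ ≤ z ^ (2 * γ) := by
        linarith [self_le_rpow_of_one_le (hC.trans hz) (by linarith : 1 ≤ 2 * γ), mem_Ici.1 hz]
      mul_nonneg (sub_nonneg.2 this) (hpos z).le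
  have hsA : ∀ z ∈ Ici C, s z ≤ wkbRate γ z := fun z hz => by
    have := deriv_nonpos_of_tendsto_zero (fun z _ => hφ z) hφ'_mono (fun z _ => hpos z) hdecay z hz
    linarith [div_nonpos_of_nonpos_of_nonneg this (hpos z).le]
  refine exists_tendsto_of_hasDerivAt_of_le_rpow (a := C) (by linarith) hγ
    (fun z hz => hasDerivAt_log_div_wkbApprox (by linarith) (hIci hz) (hφ z) (hpos z))
    fun z hz => ⟨(wkbRiccati_pos (by linarith) hμ hs z (hIci hz)).le,
      wkbRiccati_le hγ hμ.le le_rfl (fun z hz => hs z (hIci hz)) hsA z hz⟩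

end WKB

theorem anharmonic_ground_state_asymptotics_general (γ : ℝ) (hγ : 1 < γ)
    (μ₀ : ℝ) (hμ₀ : 0 < μ₀) (φ : ℝ → ℝ)
    (hsmooth : ContDiff ℝ 2 φ)
    (hpos : ∀ z, 0 < φ z)
    (heig : ∀ z : ℝ, -(deriv (deriv φ) z) + |z| ^ (2 * γ) * φ z = μ₀ * φ z)
    (hdecay : Tendsto φ atTop (nhds 0)) :
    ∃ c : ℝ, 0 < c ∧
      Tendsto (fun z : ℝ =>
          φ z / (z ^ (-(γ / 2)) * Real.exp (-(z ^ (γ + 1) / (γ + 1)))))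
        atTop (nhds c) := by
  have hφ : ∀ z, HasDerivAt φ (deriv φ z) z := fun z =>
    (hsmooth.differentiable two_ne_zero z).hasDerivAt
  have hφ' : ∀ z ∈ Ioi 0, HasDerivAt (deriv φ) ((z ^ (2 * γ) - μ₀) * φ z) z := by
    intro z hz
    have hφ'diff : Differentiable ℝ (deriv φ) :=
      (contDiff_succ_iff_deriv.1 hsmooth).2.2.differentiable one_ne_zero
    refine (hφ'diff z).hasDerivAt.congr_deriv ?_
    have := heig z
    rw [abs_of_pos hz] at this
    linear_combination -this
  obtain ⟨L, hL⟩ := exists_tendsto_log_div_wkbApprox hγ hμ₀ hφ hφ' hpos hdecay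
  refine ⟨exp L, exp_pos L, ((continuous_exp.tendsto L).comp hL).congr' ?_⟩
  filter_upwards [eventually_gt_atTop 0] with z hz
  exact exp_log (div_pos (hpos z) (wkbApprox_pos hz))

theorem anharmonic_ground_state_asymptotics (γ : ℝ) (hγ : 1 < γ)
    (μ₀ : ℝ) (hμ₀ : 0 < μ₀) (φ : ℝ → ℝ)
    (hsmooth : ContDiff ℝ 2 φ)
    (hpos : ∀ z, 0 < φ z)
    (heven : ∀ z, φ (-z) = φ z)
    (hnorm : ∫ z : ℝ, (φ z) ^ 2 = 1)
    (heig : ∀ z : ℝ, -(deriv (deriv φ) z) + |z| ^ (2 * γ) * φ z = μ₀ * φ z)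
    (hdecay : Tendsto φ atTop (nhds 0)) :
    ∃ c : ℝ, 0 < c ∧
      Tendsto (fun z : ℝ =>
          φ z / (z ^ (-(γ / 2)) * Real.exp (-(z ^ (γ + 1) / (γ + 1)))))
        atTop (nhds c) :=
  anharmonic_ground_state_asymptotics_general γ hγ μ₀ hμ₀ φ hsmooth hpos heig hdecay
end

section
/- Let M = (−1,1) × 𝕋 and γ ≥ 0. For u in the domain of Δ_γ = ∂_x² + |x|^{2γ}∂_y² with Dirichlet boundary conditions at x = ±1, there is a constant C₁ > 0 (independent of u) such that ‖|D_y|^{2/(γ+1)} u‖_{L²(M)} ≤ C₁ ‖Δ_γ u‖_{L²(M)}, where |D_y|^{s} acts on the Fourier coefficients in y by multiplication by |n|^{s}. -/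
/-!
Fix a Fourier mode `n ≠ 0` and write `v = û_n`, `f = v'' - n²|x|^{2γ} v`. Integrating `⟪v'', v⟫` by
parts against the Dirichlet data gives the energy bound `∫ |v'|² + n²|x|^{2γ}|v|² ≤ ∫ |f| |v|`.
In the variable `z = k x`, `k = |n|^{1/(γ+1)}`, the potential becomes `k²|z|^{2γ}`: it is at least
`k² 4^{-γ}` on `|x| ≥ 1/(2k)`, and on the remaining interval of length `1/k` the fundamental theorem
of calculus controls `|v|²` by its values on the neighbouring interval plus `k⁻² ∫ |v'|²`. Hence
`∫ |v|² ≲ k⁻² ∫ |f| |v|`, so `k⁴ ∫ |v|² ≲ ∫ |f|²` uniformly in `n`, and the estimate follows by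
summing over `n`.
-/

open MeasureTheory Set intervalIntegral
open scoped RealInnerProductSpace

theorem integral_le_mul_integral_add_mul_integral_abs_deriv {g g' : ℝ → ℝ}
    (hg : ∀ x, HasDerivAt g (g' x) x) (hg' : Continuous g') {a b c : ℝ} (hab : a ≤ b)
    (hbc : b < c) :
    ∫ x in a..b, g x ≤
      (b - a) / (c - b) * (∫ x in b..c, g x) + (b - a) * ∫ x in a..c, |g' x| := by
  have hgc : Continuous g := continuous_iff_continuousAt.2 fun x => (hg x).continuousAt
  obtain ⟨x₀, hx₀, hmin⟩ := isCompact_Icc.exists_isMinOn (nonempty_Icc.2 hbc.le) hgc.continuousOn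
  have hmean : (c - b) * g x₀ ≤ ∫ x in b..c, g x := by
    simpa using integral_mono_on hbc.le (intervalIntegrable_const (μ := volume))
      (hgc.intervalIntegrable _ _) fun x hx => hmin hx
  have hosc : ∀ x ∈ Icc a b, g x ≤ g x₀ + ∫ y in a..c, |g' y| := by
    intro x hx
    have hxx₀ : x ≤ x₀ := hx.2.trans hx₀.1
    have hftc : ∫ y in x..x₀, g' y = g x₀ - g x :=
      integral_eq_sub_of_hasDerivAt (fun y _ => hg y) (hg'.intervalIntegrable _ _)
    have habs : -∫ y in x..x₀, g' y ≤ ∫ y in x..x₀, |g' y| :=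
      (neg_le_abs _).trans (abs_integral_le_integral_abs hxx₀)
    have hsub : ∫ y in x..x₀, |g' y| ≤ ∫ y in a..c, |g' y| :=
      integral_mono_interval hx.1 hxx₀ hx₀.2 (Filter.Eventually.of_forall fun _ => abs_nonneg _)
        (hg'.abs.intervalIntegrable _ _)
    linarith
  calc ∫ x in a..b, g x ≤ ∫ x in a..b, (g x₀ + ∫ y in a..c, |g' y|) :=
        integral_mono_on hab (hgc.intervalIntegrable _ _) intervalIntegrable_const hosc
    _ = (b - a) / (c - b) * ((c - b) * g x₀) + (b - a) * ∫ y in a..c, |g' y| := by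
        rw [intervalIntegral.integral_const, smul_eq_mul]
        field_simp [(sub_pos.2 hbc).ne']
    _ ≤ (b - a) / (c - b) * (∫ x in b..c, g x) + (b - a) * ∫ x in a..c, |g' x| := by
        gcongr

theorem integral_sub_integral_le_of_le {f h : ℝ → ℝ} (hf : Continuous f) (hh : Continuous h)
    {a b c d : ℝ} (hab : a ≤ b) (hbc : b ≤ c) (hcd : c ≤ d) (hfh₁ : ∀ x ∈ Icc a b, f x ≤ h x)
    (hh₀ : ∀ x ∈ Icc b c, 0 ≤ h x) (hfh₂ : ∀ x ∈ Icc c d, f x ≤ h x) :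
    (∫ x in a..d, f x) - ∫ x in b..c, f x ≤ ∫ x in a..d, h x := by
  have hsplit : ∀ k : ℝ → ℝ, Continuous k →
      ∫ x in a..d, k x = (∫ x in a..b, k x) + (∫ x in b..c, k x) + ∫ x in c..d, k x :=
    fun k hk => by
      rw [integral_add_adjacent_intervals (hk.intervalIntegrable _ _) (hk.intervalIntegrable _ _),
        integral_add_adjacent_intervals (hk.intervalIntegrable _ _) (hk.intervalIntegrable _ _)]
  have h₁ : ∫ x in a..b, f x ≤ ∫ x in a..b, h x :=
    integral_mono_on hab (hf.intervalIntegrable _ _) (hh.intervalIntegrable _ _) hfh₁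
  have h₂ : ∫ x in c..d, f x ≤ ∫ x in c..d, h x :=
    integral_mono_on hcd (hf.intervalIntegrable _ _) (hh.intervalIntegrable _ _) hfh₂
  have h₀ : 0 ≤ ∫ x in b..c, h x := integral_nonneg hbc hh₀
  rw [hsplit f hf, hsplit h hh]
  linarith

section InnerProductSpace

variable {E : Type*} [NormedAddCommGroup E] [InnerProductSpace ℝ E]

theorem integral_norm_deriv_sq_add_integral_mul_norm_sq_le {v : ℝ → E} (hv : ContDiff ℝ 2 v)
    {V : ℝ → ℝ} (hV : Continuous V) {a b : ℝ} (hab : a ≤ b) (ha : v a = 0) (hb : v b = 0) :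
    (∫ x in a..b, ‖deriv v x‖ ^ 2) + ∫ x in a..b, V x * ‖v x‖ ^ 2 ≤
      ∫ x in a..b, ‖deriv (deriv v) x - V x • v x‖ * ‖v x‖ := by
  have hv' : ContDiff ℝ 1 (deriv v) := hv.deriv'
  have hcv : Continuous v := hv.continuous
  have hcv' : Continuous (deriv v) := hv'.continuous
  have hcv'' : Continuous (deriv (deriv v)) := hv'.continuous_deriv le_rfl
  -- integration by parts: `⟪v', v⟫` vanishes at both endpoints
  have hibp : ∫ x in a..b, (⟪deriv v x, deriv v x⟫ + ⟪deriv (deriv v) x, v x⟫) = 0 := by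
    rw [integral_eq_sub_of_hasDerivAt (f := fun x => ⟪deriv v x, v x⟫)
      (fun x _ => ((hv'.differentiable one_ne_zero x).hasDerivAt).inner ℝ
        ((hv.differentiable two_ne_zero x).hasDerivAt))
      (Continuous.intervalIntegrable (by fun_prop) _ _), ha, hb]
    simp
  rw [← intervalIntegral.integral_add (Continuous.intervalIntegrable (by fun_prop) _ _)
    (Continuous.intervalIntegrable (by fun_prop) _ _)]
  calc ∫ x in a..b, (‖deriv v x‖ ^ 2 + V x * ‖v x‖ ^ 2)
      = ∫ x in a..b, ((⟪deriv v x, deriv v x⟫ + ⟪deriv (deriv v) x, v x⟫)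
          + -⟪deriv (deriv v) x - V x • v x, v x⟫) := by
        refine integral_congr fun x _ => ?_
        simp only [inner_sub_left, real_inner_smul_left, real_inner_self_eq_norm_sq]
        ring
    _ = ∫ x in a..b, -⟪deriv (deriv v) x - V x • v x, v x⟫ := by
        rw [intervalIntegral.integral_add (Continuous.intervalIntegrable (by fun_prop) _ _)
          (Continuous.intervalIntegrable (by fun_prop) _ _), hibp, zero_add]
    _ ≤ ∫ x in a..b, ‖deriv (deriv v) x - V x • v x‖ * ‖v x‖ :=
        integral_mono_on hab (Continuous.intervalIntegrable (by fun_prop) _ _)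
          (Continuous.intervalIntegrable (by fun_prop) _ _)
          fun x _ => (neg_le_abs _).trans (abs_real_inner_le_norm _ _)

theorem integral_norm_sq_near_zero_le {v : ℝ → E} (hv : ContDiff ℝ 1 v) {r : ℝ} (hr : 0 < r) :
    ∫ x in -r..r, ‖v x‖ ^ 2 ≤
      5 * (∫ x in r..2 * r, ‖v x‖ ^ 2) + 16 * r ^ 2 * ∫ x in -r..2 * r, ‖deriv v x‖ ^ 2 := by
  have hcv : Continuous v := hv.continuous
  have hcv' : Continuous (deriv v) := hv.continuous_deriv le_rfl
  have hosc := integral_le_mul_integral_add_mul_integral_abs_deriv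
    (fun x => (hv.differentiable one_ne_zero x).hasDerivAt.norm_sq) (by fun_prop)
    (neg_le_self hr.le) (by linarith : r < 2 * r)
  -- the weight `4 r` makes the `‖v‖²` term, once multiplied by the length `2 r`, absorbable
  have hyoung : ∀ x, |2 * ⟪v x, deriv v x⟫| ≤ ‖v x‖ ^ 2 / (4 * r) + 4 * r * ‖deriv v x‖ ^ 2 := by
    intro x
    have hcs : |2 * ⟪v x, deriv v x⟫| ≤ 2 * (‖v x‖ * ‖deriv v x‖) := by
      rw [abs_mul, abs_two]
      exact mul_le_mul_of_nonneg_left (abs_real_inner_le_norm _ _) zero_le_two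
    have hamgm : 2 * (‖v x‖ * ‖deriv v x‖) ≤ ‖v x‖ ^ 2 / (4 * r) + 4 * r * ‖deriv v x‖ ^ 2 := by
      rw [div_add' _ _ _ (by positivity), le_div_iff₀ (by positivity)]
      nlinarith [sq_nonneg (‖v x‖ - 4 * r * ‖deriv v x‖)]
    exact hcs.trans hamgm
  have hderiv : ∫ x in -r..2 * r, |2 * ⟪v x, deriv v x⟫| ≤
      (∫ x in -r..2 * r, ‖v x‖ ^ 2) / (4 * r) + 4 * r * ∫ x in -r..2 * r, ‖deriv v x‖ ^ 2 := by
    rw [← intervalIntegral.integral_div, ← intervalIntegral.integral_const_mul,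
      ← intervalIntegral.integral_add (Continuous.intervalIntegrable (by fun_prop) _ _)
        (Continuous.intervalIntegrable (by fun_prop) _ _)]
    exact integral_mono_on (by linarith) (Continuous.intervalIntegrable (by fun_prop) _ _)
      (Continuous.intervalIntegrable (by fun_prop) _ _) fun x _ => hyoung x
  have hsplit : ∫ x in -r..2 * r, ‖v x‖ ^ 2 =
      (∫ x in -r..r, ‖v x‖ ^ 2) + ∫ x in r..2 * r, ‖v x‖ ^ 2 :=
    (integral_add_adjacent_intervals (Continuous.intervalIntegrable (by fun_prop) _ _)
      (Continuous.intervalIntegrable (by fun_prop) _ _)).symm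
  rw [show (r - -r) / (2 * r - r) = 2 by field_simp; ring, show r - -r = 2 * r by ring] at hosc
  rw [hsplit] at hderiv
  have hdamp : 2 * r * ∫ x in -r..2 * r, |2 * ⟪v x, deriv v x⟫| ≤
      ((∫ x in -r..r, ‖v x‖ ^ 2) + ∫ x in r..2 * r, ‖v x‖ ^ 2) / 2 +
        8 * r ^ 2 * ∫ x in -r..2 * r, ‖deriv v x‖ ^ 2 := by
    refine (mul_le_mul_of_nonneg_left hderiv (by positivity)).trans_eq ?_
    field_simp
    ring
  linarith

theorem integral_norm_sq_le_of_le_potential {v : ℝ → E} (hv : ContDiff ℝ 1 v) {V : ℝ → ℝ}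
    (hV : Continuous V) (hV₀ : ∀ x, 0 ≤ V x) {r m : ℝ} (hr : 0 < r) (h2r : 2 * r ≤ 1) (hm : 0 < m)
    (hVm : ∀ x, r ≤ |x| → m ≤ V x) :
    ∫ x in -1..1, ‖v x‖ ^ 2 ≤
      16 * r ^ 2 * (∫ x in -1..1, ‖deriv v x‖ ^ 2) + 6 / m * ∫ x in -1..1, V x * ‖v x‖ ^ 2 := by
  have hcv : Continuous v := hv.continuous
  have hcv' : Continuous (deriv v) := hv.continuous_deriv le_rfl
  have hweight : ∀ x, r ≤ |x| → m * ‖v x‖ ^ 2 ≤ V x * ‖v x‖ ^ 2 := fun x hx =>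
    mul_le_mul_of_nonneg_right (hVm x hx) (sq_nonneg _)
  have hnear := integral_norm_sq_near_zero_le hv hr
  have hfar : (∫ x in -1..1, ‖v x‖ ^ 2) - ∫ x in -r..r, ‖v x‖ ^ 2 ≤
      (∫ x in -1..1, V x * ‖v x‖ ^ 2) / m := by
    rw [le_div_iff₀' hm, mul_sub, ← intervalIntegral.integral_const_mul,
      ← intervalIntegral.integral_const_mul]
    refine integral_sub_integral_le_of_le (by fun_prop) (by fun_prop) (by linarith) (by linarith)
      (by linarith) (fun x hx => hweight x ?_) (fun x _ => mul_nonneg (hV₀ x) (sq_nonneg _))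
      (fun x hx => hweight x ?_)
    · exact le_abs.2 (Or.inr (by linarith [hx.2]))
    · exact le_abs.2 (Or.inl hx.1)
  have hmiddle : ∫ x in r..2 * r, ‖v x‖ ^ 2 ≤ (∫ x in -1..1, V x * ‖v x‖ ^ 2) / m := by
    rw [le_div_iff₀' hm, ← intervalIntegral.integral_const_mul]
    calc ∫ x in r..2 * r, m * ‖v x‖ ^ 2 ≤ ∫ x in r..2 * r, V x * ‖v x‖ ^ 2 :=
          integral_mono_on (by linarith) (Continuous.intervalIntegrable (by fun_prop) _ _)
            (Continuous.intervalIntegrable (by fun_prop) _ _)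
            fun x hx => hweight x (hx.1.trans (le_abs_self x))
      _ ≤ ∫ x in -1..1, V x * ‖v x‖ ^ 2 :=
          integral_mono_interval (by linarith) (by linarith) h2r
            (Filter.Eventually.of_forall fun x => mul_nonneg (hV₀ x) (sq_nonneg _))
            (Continuous.intervalIntegrable (by fun_prop) _ _)
  have hderiv : ∫ x in -r..2 * r, ‖deriv v x‖ ^ 2 ≤ ∫ x in -1..1, ‖deriv v x‖ ^ 2 :=
    integral_mono_interval (by linarith) (by linarith) h2r
      (Filter.Eventually.of_forall fun x => by positivity)
      (Continuous.intervalIntegrable (by fun_prop) _ _)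
  rw [div_mul_eq_mul_div, mul_div_assoc]
  linarith [mul_le_mul_of_nonneg_left hderiv (by positivity : (0 : ℝ) ≤ 16 * r ^ 2)]

theorem integral_norm_sq_le_sq_mul_integral_norm_sq {v : ℝ → E} (hv : ContDiff ℝ 2 v)
    (hv_neg : v (-1) = 0) (hv_pos : v 1 = 0) {V : ℝ → ℝ} (hV : Continuous V) (hV₀ : ∀ x, 0 ≤ V x)
    {r A : ℝ} (hr : 0 < r) (h2r : 2 * r ≤ 1) (hrA : 16 * r ^ 2 ≤ A)
    (hVA : ∀ x, r ≤ |x| → 6 / A ≤ V x) :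
    ∫ x in -1..1, ‖v x‖ ^ 2 ≤ A ^ 2 * ∫ x in -1..1, ‖deriv (deriv v) x - V x • v x‖ ^ 2 := by
  have hA : 0 < A := lt_of_lt_of_le (by positivity) hrA
  have hcv : Continuous v := hv.continuous
  have hcv'' : Continuous (deriv (deriv v)) := hv.deriv'.continuous_deriv le_rfl
  have hloc := integral_norm_sq_le_of_le_potential hv.of_succ hV hV₀ hr h2r (by positivity) hVA
  rw [div_div_cancel₀ (by norm_num)] at hloc
  have henergy :=
    integral_norm_deriv_sq_add_integral_mul_norm_sq_le hv hV (by norm_num) hv_neg hv_pos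
  have hyoung : ∫ x in -1..1, ‖deriv (deriv v) x - V x • v x‖ * ‖v x‖ ≤
      A / 2 * (∫ x in -1..1, ‖deriv (deriv v) x - V x • v x‖ ^ 2) +
        (∫ x in -1..1, ‖v x‖ ^ 2) / (2 * A) := by
    rw [← intervalIntegral.integral_div, ← intervalIntegral.integral_const_mul,
      ← intervalIntegral.integral_add (Continuous.intervalIntegrable (by fun_prop) _ _)
        (Continuous.intervalIntegrable (by fun_prop) _ _)]
    refine integral_mono_on (by norm_num) (Continuous.intervalIntegrable (by fun_prop) _ _)
      (Continuous.intervalIntegrable (by fun_prop) _ _) fun x _ => ?_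
    rw [div_mul_eq_mul_div, div_add_div _ _ two_ne_zero (by positivity),
      le_div_iff₀ (by positivity)]
    nlinarith [sq_nonneg (A * ‖deriv (deriv v) x - V x • v x‖ - ‖v x‖)]
  have hQ : 0 ≤ ∫ x in -1..1, ‖deriv v x‖ ^ 2 :=
    integral_nonneg (by norm_num) fun _ _ => by positivity
  have hcombined : ∫ x in -1..1, ‖v x‖ ^ 2 ≤
      A ^ 2 / 2 * (∫ x in -1..1, ‖deriv (deriv v) x - V x • v x‖ ^ 2) +
        (∫ x in -1..1, ‖v x‖ ^ 2) / 2 :=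
    calc ∫ x in -1..1, ‖v x‖ ^ 2
        ≤ A * ((∫ x in -1..1, ‖deriv v x‖ ^ 2) + ∫ x in -1..1, V x * ‖v x‖ ^ 2) := by
          linarith [mul_le_mul_of_nonneg_right hrA hQ]
      _ ≤ A * (A / 2 * (∫ x in -1..1, ‖deriv (deriv v) x - V x • v x‖ ^ 2) +
            (∫ x in -1..1, ‖v x‖ ^ 2) / (2 * A)) :=
          mul_le_mul_of_nonneg_left (henergy.trans hyoung) hA.le
      _ = _ := by field_simp
  linarith

end InnerProductSpace

theorem sq_div_four_rpow_le {γ k x : ℝ} (hγ : 0 ≤ γ) (hk : 0 < k) (hx : 1 ≤ 2 * k * |x|) :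
    k ^ 2 / 4 ^ γ ≤ (k ^ (γ + 1)) ^ 2 * |x| ^ (2 * γ) := by
  have hscaled : (2 * k * |x|) ^ (2 * γ) = 4 ^ γ * (k ^ (2 * γ) * |x| ^ (2 * γ)) := by
    rw [Real.mul_rpow (by positivity) (abs_nonneg x), Real.mul_rpow zero_le_two hk.le,
      Real.rpow_mul zero_le_two]
    norm_num
    ring
  have hsq : (k ^ (γ + 1)) ^ 2 = k ^ 2 * k ^ (2 * γ) := by
    rw [← Real.rpow_mul_natCast hk.le, ← Real.rpow_natCast k 2, ← Real.rpow_add hk]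
    push_cast
    ring_nf
  have hone : 1 ≤ 4 ^ γ * (k ^ (2 * γ) * |x| ^ (2 * γ)) :=
    hscaled ▸ Real.one_le_rpow hx (by positivity)
  rw [hsq, div_le_iff₀ (by positivity)]
  linarith [mul_le_mul_of_nonneg_left hone (sq_nonneg k)]

theorem grushin_mode_estimate {γ : ℝ} (hγ : 0 ≤ γ) (n : ℤ) {v : ℝ → ℂ} (hv : ContDiff ℝ 2 v)
    (hv_neg : v (-1) = 0) (hv_pos : v 1 = 0) :
    |(n : ℝ)| ^ (4 / (γ + 1)) * ∫ x in Ioo (-1 : ℝ) 1, ‖v x‖ ^ 2 ≤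
      (6 * 4 ^ γ) ^ 2 * ∫ x in Ioo (-1 : ℝ) 1,
        ‖deriv (deriv v) x - (((n : ℝ) ^ 2 * |x| ^ (2 * γ) : ℝ) : ℂ) * v x‖ ^ 2 := by
  have hIoo : ∀ f : ℝ → ℝ, ∫ x in Ioo (-1 : ℝ) 1, f x = ∫ x in -1..1, f x := fun f => by
    rw [integral_of_le (by norm_num), integral_Ioc_eq_integral_Ioo]
  rw [hIoo, hIoo]
  rcases eq_or_ne n 0 with rfl | hn
  · rw [Int.cast_zero, abs_zero, Real.zero_rpow (by positivity), zero_mul]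
    exact mul_nonneg (by positivity) (integral_nonneg (by norm_num) fun _ _ => by positivity)
  have hγ₁ : 0 < γ + 1 := by linarith
  have hN : 1 ≤ |(n : ℝ)| := by rw [← Int.cast_abs]; exact_mod_cast Int.one_le_abs hn
  set k := |(n : ℝ)| ^ (γ + 1)⁻¹
  have hk : 1 ≤ k := Real.one_le_rpow hN (inv_nonneg.2 hγ₁.le)
  have hNk : k ^ (γ + 1) = |(n : ℝ)| := Real.rpow_inv_rpow (by positivity) hγ₁.ne'
  have hpow : |(n : ℝ)| ^ (4 / (γ + 1)) = k ^ 4 := by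
    rw [← Real.rpow_mul_natCast (by positivity), div_eq_inv_mul]
    norm_num
  have h4γ : 1 ≤ (4 : ℝ) ^ γ := Real.one_le_rpow (by norm_num) hγ
  have hk₀ : 0 < k := by linarith
  have hrA : 16 * (1 / (2 * k)) ^ 2 ≤ 6 * 4 ^ γ / k ^ 2 := by
    rw [show 16 * (1 / (2 * k)) ^ 2 = 4 / k ^ 2 by field_simp; ring]
    gcongr
    linarith
  have hVA : ∀ x, 1 / (2 * k) ≤ |x| → 6 / (6 * 4 ^ γ / k ^ 2) ≤ (n : ℝ) ^ 2 * |x| ^ (2 * γ) := by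
    intro x hx
    rw [show 6 / (6 * 4 ^ γ / k ^ 2) = k ^ 2 / 4 ^ γ by field_simp, ← sq_abs (n : ℝ), ← hNk]
    refine sq_div_four_rpow_le hγ hk₀ ?_
    rwa [div_le_iff₀ (by positivity), mul_comm] at hx
  have hmode := integral_norm_sq_le_sq_mul_integral_norm_sq hv hv_neg hv_pos
    (V := fun x => (n : ℝ) ^ 2 * |x| ^ (2 * γ))
    (continuous_const.mul (continuous_abs.rpow_const fun _ => Or.inr (by positivity)))
    (fun _ => by positivity) (by positivity) (by field_simp; linarith) hrA hVA
  simp only [Complex.real_smul] at hmode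
  rw [div_pow, ← pow_mul, div_mul_eq_mul_div, le_div_iff₀ (by positivity)] at hmode
  rw [hpow, mul_comm]
  exact hmode

/-- Writing `u(x,y) = Σ_n (u n)(x) e^{iny}`, the `n`-th Fourier mode of `Δ_γ u` is
`(u n)'' - n²|x|^{2γ} u n`, and the `L²(M)` norms are computed by Plancherel. -/
theorem grushin_coercivity_Dy (γ : ℝ) (hγ : 0 ≤ γ) :
    ∃ C₁ : ℝ, 0 < C₁ ∧
      ∀ u : ℤ → ℝ → ℂ,
        (∀ n, ContDiff ℝ 2 (u n)) →
        (∀ n, u n (-1) = 0 ∧ u n 1 = 0) →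
        (∀ n, IntegrableOn (fun x : ℝ => ‖u n x‖ ^ 2) (Set.Ioo (-1 : ℝ) 1)) →
        (∀ n, IntegrableOn
          (fun x : ℝ =>
            ‖deriv (deriv (u n)) x - (((n : ℝ) ^ 2 * |x| ^ (2 * γ) : ℝ) : ℂ) * u n x‖ ^ 2)
          (Set.Ioo (-1 : ℝ) 1)) →
        Summable (fun n : ℤ =>
          ∫ x in Set.Ioo (-1 : ℝ) 1, ‖u n x‖ ^ 2) →
        Summable (fun n : ℤ =>
          ∫ x in Set.Ioo (-1 : ℝ) 1,
            ‖deriv (deriv (u n)) x - (((n : ℝ) ^ 2 * |x| ^ (2 * γ) : ℝ) : ℂ) * u n x‖ ^ 2) →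
        (∑' n : ℤ, |(n : ℝ)| ^ (4 / (γ + 1)) * ∫ x in Set.Ioo (-1 : ℝ) 1, ‖u n x‖ ^ 2)
          ≤ C₁ ^ 2 * ∑' n : ℤ, ∫ x in Set.Ioo (-1 : ℝ) 1,
              ‖deriv (deriv (u n)) x - (((n : ℝ) ^ 2 * |x| ^ (2 * γ) : ℝ) : ℂ) * u n x‖ ^ 2 := by
  refine ⟨6 * 4 ^ γ, by positivity, fun u hu hbd _ _ _ hsum => ?_⟩
  have hmode n := grushin_mode_estimate hγ n (hu n) (hbd n).1 (hbd n).2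
  rw [← tsum_mul_left]
  have hnonneg (n : ℤ) : 0 ≤ |(n : ℝ)| ^ (4 / (γ + 1)) * ∫ x in Ioo (-1 : ℝ) 1, ‖u n x‖ ^ 2 :=
    mul_nonneg (by positivity) (setIntegral_nonneg measurableSet_Ioo fun _ _ => by positivity)
  exact Summable.tsum_le_tsum hmode (.of_nonneg_of_le hnonneg hmode (hsum.mul_left _))
    (hsum.mul_left _)
end
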